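/- For every real number v with |v| ≤ 2.1, setting w = tanh v − v, one has −w·(w + 0.5379·v) ≥ 0; equivalently, (v − tanh v)·(tanh v − 0.4621·v) ≥ 0 for all v ∈ [−2.1, 2.1]. -/

import Mathlib

/-!
On `[0, ∞)` the function `tanh` lies below the identity (its derivative `1 / cosh² ≤ 1`) and is
concave (its derivative is antitone), so on `[0, 2.1]` it lies above its chord through the origin,
whose slope `tanh 2.1 / 2.1 ≈ 0.46211` exceeds `0.4621`. Both factors of
`(v - tanh v) (tanh v - 0.4621 v)` are therefore nonnegative there, and the product is even in `v`.
-/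

open Set

namespace Real

theorem hasDerivAt_tanh (x : ℝ) : HasDerivAt tanh (1 / cosh x ^ 2) x := by
  have h := (hasDerivAt_sinh x).div (hasDerivAt_cosh x) (cosh_pos x).ne'
  rw [show cosh x * cosh x - sinh x * sinh x = 1 by nlinarith [cosh_sq_sub_sinh_sq x]] at h
  rwa [show tanh = sinh / cosh from funext tanh_eq_sinh_div_cosh]

theorem monotone_id_sub_tanh : Monotone fun x => x - tanh x := by
  have hd (x : ℝ) : HasDerivAt (fun x => x - tanh x) (1 - 1 / cosh x ^ 2) x :=
    (hasDerivAt_id x).sub (hasDerivAt_tanh x)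
  refine monotone_of_deriv_nonneg (fun x => (hd x).differentiableAt) fun x => ?_
  rw [(hd x).deriv, sub_nonneg, div_le_one (by positivity)]
  nlinarith [one_le_cosh x]

theorem tanh_le_self {x : ℝ} (hx : 0 ≤ x) : tanh x ≤ x := by
  simpa using monotone_id_sub_tanh hx

theorem concaveOn_tanh_Ici : ConcaveOn ℝ (Ici 0) tanh := by
  refine AntitoneOn.concaveOn_of_deriv (convex_Ici 0)
    (fun x _ => (hasDerivAt_tanh x).continuousAt.continuousWithinAt)
    (fun x _ => (hasDerivAt_tanh x).differentiableAt.differentiableWithinAt) ?_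
  rw [interior_Ici]
  intro x hx y hy hxy
  rw [(hasDerivAt_tanh x).deriv, (hasDerivAt_tanh y).deriv]
  have hcosh : cosh x ≤ cosh y := by
    rwa [cosh_le_cosh, abs_of_pos hx, abs_of_pos hy]
  gcongr

theorem lt_exp_two_point_one : (8.1649 : ℝ) < exp 2.1 := by
  have hsplit : exp 2.1 = exp 1 ^ 2 * exp 0.1 := by
    rw [← exp_nat_mul, ← exp_add]
    norm_num
  have he : 2.7182818283 < exp 1 := exp_one_gt_d9
  have he' : 1 + 0.1 + 0.1 ^ 2 / 2 ≤ exp 0.1 := quadratic_le_exp_of_nonneg (by norm_num)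
  rw [hsplit]
  nlinarith [exp_pos 1, exp_pos 0.1]

-- `0.97041 = 0.4621 * 2.1`
theorem le_tanh_two_point_one : (0.97041 : ℝ) ≤ tanh 2.1 := by
  have hE := lt_exp_two_point_one
  have hinv : exp (-2.1) * exp 2.1 = 1 := by rw [← exp_add]; norm_num
  rw [tanh_eq, le_div_iff₀ (by positivity)]
  nlinarith [exp_pos (-2.1)]

end Real

open Real

theorem ConcaveOn.mul_div_le_of_map_zero {𝕜 : Type*} [Field 𝕜] [LinearOrder 𝕜]
    [IsStrictOrderedRing 𝕜] {s : Set 𝕜} {f : 𝕜 → 𝕜} (hf : ConcaveOn 𝕜 s f) (h0 : 0 ∈ s)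
    (hf0 : f 0 = 0) {a x : 𝕜} (ha : a ∈ s) (hx : 0 ≤ x) (hxa : x ≤ a) :
    x * (f a / a) ≤ f x := by
  rcases hx.eq_or_lt with rfl | hx
  · simp [hf0]
  have hxs : x ∈ s := hf.1.ordConnected.out h0 ha ⟨hx.le, hxa⟩
  have hslope := hf.slope_anti h0 ⟨hxs, hx.ne'⟩ ⟨ha, (hx.trans_le hxa).ne'⟩ hxa
  simp only [slope_fun_def_field, hf0, sub_zero] at hslope
  calc x * (f a / a) ≤ x * (f x / x) := by gcongr
    _ = f x := by field_simp

theorem tanh_sector_of_nonneg {v : ℝ} (h0 : 0 ≤ v) (h1 : v ≤ 2.1) :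
    0 ≤ (v - tanh v) * (tanh v - 0.4621 * v) := by
  have hchord : v * (tanh 2.1 / 2.1) ≤ tanh v :=
    concaveOn_tanh_Ici.mul_div_le_of_map_zero self_mem_Ici tanh_zero (by norm_num) h0 h1
  have hslope : 0.4621 * v ≤ v * (tanh 2.1 / 2.1) := by
    rw [mul_comm]
    gcongr
    rw [le_div_iff₀ (by norm_num)]
    linarith [le_tanh_two_point_one]
  exact mul_nonneg (sub_nonneg.2 (tanh_le_self h0)) (by linarith)

theorem tanh_sector {v : ℝ} (hv : |v| ≤ 2.1) :
    0 ≤ (v - tanh v) * (tanh v - 0.4621 * v) := by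
  rcases le_total 0 v with h | h
  · exact tanh_sector_of_nonneg h ((le_abs_self v).trans hv)
  · have := tanh_sector_of_nonneg (neg_nonneg.2 h) ((neg_le_abs v).trans hv)
    rw [tanh_neg] at this
    linarith

/-- Sector constraint on `Δ(v) = tanh v - v` from the triple-integrator example of
Section V of the paper: `-w (w + 0.5379 v) ≥ 0` with `w = tanh v - v`, for `|v| ≤ 2.1`;
equivalently `(v - tanh v)(tanh v - 0.4621 v) ≥ 0`. -/
theorem stmt_9 (v : ℝ) (hv : |v| ≤ 2.1) :
    -(Real.tanh v - v) * ((Real.tanh v - v) + 0.5379 * v) ≥ 0 ∧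
      (v - Real.tanh v) * (Real.tanh v - 0.4621 * v) ≥ 0 := by
  have hsector := tanh_sector hv
  have hsame : -(tanh v - v) * ((tanh v - v) + 0.5379 * v) =
      (v - tanh v) * (tanh v - 0.4621 * v) := by ring
  exact ⟨hsame ▸ hsector, hsector⟩
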